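/- Let A, B ∈ ℂⁿˣⁿ with A invertible. Suppose that for all τ ∈ (0,1], SRG(A)⁻¹ ∩ (−τ·SRG(B)) = ∅, where SRG(A)⁻¹ = { (z⁻¹)* : z ∈ SRG(A) }, and assume the Minkowski-sum over-approximation SRG(A⁻¹ + τB) ⊆ SRG(A⁻¹) + τ·SRG(B) holds for all τ ∈ (0,1]. Then det(I + τAB) ≠ 0 for all τ ∈ (0,1]. -/

import Mathlib

open Complex Pointwise

noncomputable def ang {n : ℕ} (y u : EuclideanSpace ℂ (Fin n)) : ℝ :=
  Real.arccos ((inner ℂ y u : ℂ).re / (‖y‖ * ‖u‖))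

noncomputable def SRG {n : ℕ}
    (A : EuclideanSpace ℂ (Fin n) →ₗ[ℂ] EuclideanSpace ℂ (Fin n)) : Set ℂ :=
  { z | ∃ u : EuclideanSpace ℂ (Fin n), u ≠ 0 ∧
      (z = ((‖A u‖ / ‖u‖ : ℝ) : ℂ) * Complex.exp ((ang (A u) u : ℝ) * Complex.I) ∨
       z = ((‖A u‖ / ‖u‖ : ℝ) : ℂ) * Complex.exp (-((ang (A u) u : ℝ)) * Complex.I)) }

noncomputable def SRGm {n : ℕ} (A : Matrix (Fin n) (Fin n) ℂ) : Set ℂ :=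
  SRG (Matrix.toEuclideanLin A)

lemma ang_symm {n : ℕ} (y u : EuclideanSpace ℂ (Fin n)) : ang y u = ang u y := by
  unfold ang
  rw [mul_comm ‖y‖ ‖u‖]
  congr 1
  have : (inner ℂ y u : ℂ) = starRingEnd ℂ (inner ℂ u y : ℂ) := (inner_conj_symm _ _).symm
  rw [this, Complex.conj_re]

lemma zero_mem_srg_of_det_eq_zero {n : ℕ} (M : Matrix (Fin n) (Fin n) ℂ)
    (h : M.det = 0) : (0 : ℂ) ∈ SRGm M := by
  obtain ⟨v, hv, hMv⟩ := (Matrix.exists_mulVec_eq_zero_iff).2 h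
  refine ⟨(WithLp.equiv 2 (Fin n → ℂ)).symm v, ?_, Or.inl ?_⟩
  · simpa using hv
  · rw [WithLp.equiv_symm_apply, Matrix.toEuclideanLin_apply_piLp_toLp, hMv]
    simp

lemma srg_inv_mem {n : ℕ} (A : Matrix (Fin n) (Fin n) ℂ) (hA : IsUnit A)
    {w : ℂ} (hw : w ∈ SRGm A⁻¹) :
    ∃ z ∈ SRGm A, w = (starRingEnd ℂ) z⁻¹ := by
  have hd : IsUnit A.det := (Matrix.isUnit_iff_isUnit_det A).1 hA
  obtain ⟨u, hu, hz⟩ := hw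
  set v := Matrix.toEuclideanLin A⁻¹ u with hv
  have hAv : Matrix.toEuclideanLin A v = u := by
    rw [hv, Matrix.toEuclideanLin_apply, Matrix.toEuclideanLin_apply]
    simp [Matrix.mulVec_mulVec, Matrix.mul_nonsing_inv A hd]
  have hvne : v ≠ 0 := by
    intro h0
    apply hu
    rw [← hAv, h0, map_zero]
  have hune : ‖u‖ ≠ 0 := norm_ne_zero_iff.2 hu
  have hvnn : ‖v‖ ≠ 0 := norm_ne_zero_iff.2 hvne
  have hangle : ang u v = ang v u := ang_symm u v
  have hexp : ∀ θ : ℝ, Complex.exp ((θ : ℂ) * Complex.I) ≠ 0 := fun θ => Complex.exp_ne_zero _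
  rcases hz with hz | hz
  · refine ⟨((‖u‖ / ‖v‖ : ℝ) : ℂ) * Complex.exp ((ang v u : ℝ) * Complex.I),
      ⟨v, hvne, Or.inl ?_⟩, ?_⟩
    · rw [hAv, hangle]
    · rw [hz, mul_inv, map_mul, map_inv₀, map_inv₀, Complex.conj_ofReal,
        ← Complex.exp_conj, map_mul, Complex.conj_ofReal, Complex.conj_I,
        mul_neg, Complex.exp_neg, inv_inv]
      push_cast
      rw [div_eq_mul_inv, div_eq_mul_inv, mul_inv, inv_inv, mul_comm (‖u‖:ℂ)⁻¹]
  · refine ⟨((‖u‖ / ‖v‖ : ℝ) : ℂ) * Complex.exp (-((ang v u : ℝ)) * Complex.I),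
      ⟨v, hvne, Or.inr ?_⟩, ?_⟩
    · rw [hAv, hangle]
    · rw [hz, mul_inv, map_mul, map_inv₀, map_inv₀, Complex.conj_ofReal,
        ← Complex.exp_conj, map_mul, map_neg, Complex.conj_ofReal, Complex.conj_I,
        neg_mul_neg, ← Complex.exp_neg, neg_mul]
      push_cast
      rw [div_eq_mul_inv, div_eq_mul_inv, mul_inv, inv_inv, mul_comm (‖u‖:ℂ)⁻¹]

theorem srg_homotopy_det {n : ℕ} (A B : Matrix (Fin n) (Fin n) ℂ)
    (hA : IsUnit A)
    (hsep : ∀ τ : ℝ, τ ∈ Set.Ioc (0 : ℝ) 1 →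
      { w : ℂ | ∃ z ∈ SRGm A, w = (starRingEnd ℂ) z⁻¹ } ∩
        ((fun z => -((τ : ℂ) * z)) '' SRGm B) = ∅)
    (hsub : ∀ τ : ℝ, τ ∈ Set.Ioc (0 : ℝ) 1 →
      SRGm (A⁻¹ + (τ : ℂ) • B) ⊆ SRGm A⁻¹ + (fun z => (τ : ℂ) * z) '' SRGm B) :
    ∀ τ : ℝ, τ ∈ Set.Ioc (0 : ℝ) 1 → (1 + (τ : ℂ) • (A * B)).det ≠ 0 := by
  intro τ hτ hdet
  have hd : IsUnit A.det := (Matrix.isUnit_iff_isUnit_det A).1 hA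
  have hfact : A⁻¹ + (τ : ℂ) • B = A⁻¹ * (1 + (τ : ℂ) • (A * B)) := by
    rw [mul_add, mul_one, Matrix.mul_smul, ← Matrix.mul_assoc,
      Matrix.nonsing_inv_mul A hd, Matrix.one_mul]
  have h0 : (A⁻¹ + (τ : ℂ) • B).det = 0 := by
    rw [hfact, Matrix.det_mul, hdet, mul_zero]
  have h0mem : (0 : ℂ) ∈ SRGm (A⁻¹ + (τ : ℂ) • B) := zero_mem_srg_of_det_eq_zero _ h0
  obtain ⟨z1, hz1, w, hw, hsum⟩ := hsub τ hτ h0mem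
  obtain ⟨z2, hz2, rfl⟩ := hw
  obtain ⟨z, hzA, hz⟩ := srg_inv_mem A hA hz1
  have hmem : z1 ∈ ({ w : ℂ | ∃ z ∈ SRGm A, w = (starRingEnd ℂ) z⁻¹ } ∩
      ((fun z => -((τ : ℂ) * z)) '' SRGm B)) := by
    refine ⟨⟨z, hzA, hz⟩, ⟨z2, hz2, ?_⟩⟩
    dsimp only
    linear_combination -hsum
  rw [hsep τ hτ] at hmem
  exact hmem
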